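/- For every integer k ≥ 2 and every h ∈ {0, 1, …, k−1}, there is exactly one root α of the k-generalized Fibonacci polynomial f_k whose argument θ ∈ [0, 2π) (i.e., α = |α|·e^(iθ)) satisfies |θ − 2πh/k − 2πm| < π/k for some integer m. -/

import Mathlib

/-!
The roots of `f_k` are the solutions `x ≠ 1` of `x ^ k * (2 - x) = 1`. For `0 < h < k`, the branch
`x ↦ exp (2πih/k) * (2 - x) ^ (-1/k)` of the `k`-th root of `1 / (2 - x)` (principal logarithm)
maps the closed unit disk into itself with derivative of norm at most `1/k`, so it has a fixed
point; this is a root of argument `(2πh - arg (2 - x)) / k` with `|arg (2 - x)| < π / 2`, hence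
in the `h`-th sector. The real root in `[3/2, 2)` lies in the sector `h = 0`. The `k` sectors are
disjoint and `f_k` has at most `k` roots, so choosing one root per sector exhausts all roots.
-/

open Polynomial Real

/-- The `k`-generalized Fibonacci polynomial `f_k(X) = X^k - X^(k-1) - ⋯ - X - 1`,
viewed as a polynomial over `ℂ`. -/
noncomputable def fibPoly (k : ℕ) : Polynomial ℂ :=
  X ^ k - ∑ i ∈ Finset.range k, X ^ i

lemma existsUnique_mem_of_card_le {ι α : Type*} [Fintype ι] [DecidableEq α] {Z : Finset α}
    (hZ : Z.card ≤ Fintype.card ι) {P : ι → α → Prop} (hex : ∀ i, ∃ z ∈ Z, P i z)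
    (hdisj : ∀ z ∈ Z, ∀ i j, P i z → P j z → i = j) (i : ι) : ∃! z, z ∈ Z ∧ P i z := by
  choose f hfZ hfP using hex
  have hf : Function.Injective f := fun i j hij =>
    hdisj _ (hfZ i) i j (hfP i) (hij ▸ hfP j)
  have himage : Finset.univ.image f = Z := Finset.eq_of_subset_of_card_le
    (Finset.image_subset_iff.2 fun i _ => hfZ i)
    (by rwa [Finset.card_image_of_injective _ hf, Finset.card_univ])
  refine ⟨f i, ⟨hfZ i, hfP i⟩, fun z ⟨hz, hPz⟩ => ?_⟩
  obtain ⟨j, -, rfl⟩ := Finset.mem_image.1 (himage ▸ hz)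
  rw [hdisj _ hz i j hPz (hfP j)]

lemma Complex.exp_eq_norm_mul_exp_im_mul_I (w : ℂ) :
    Complex.exp w = ‖Complex.exp w‖ * Complex.exp (w.im * Complex.I) := by
  conv_lhs => rw [← Complex.re_add_im w, Complex.exp_add]
  rw [Complex.norm_exp, Complex.ofReal_exp]

section FibPoly

variable {k : ℕ} {x : ℂ}

lemma eval_zero_fibPoly (hk : k ≠ 0) : (fibPoly k).eval 0 = -1 := by
  obtain ⟨k, rfl⟩ := Nat.exists_eq_succ_of_ne_zero hk
  simp [fibPoly, eval_finsetSum, Finset.sum_range_succ']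

lemma fibPoly_ne_zero (hk : k ≠ 0) : fibPoly k ≠ 0 := fun h0 => by
  simpa [h0] using eval_zero_fibPoly hk

lemma ne_zero_of_isRoot_fibPoly (hk : k ≠ 0) (hx : (fibPoly k).IsRoot x) : x ≠ 0 := by
  rintro rfl
  simp [IsRoot, eval_zero_fibPoly hk] at hx

lemma natDegree_fibPoly_le : (fibPoly k).natDegree ≤ k :=
  (natDegree_sub_le _ _).trans <| max_le (natDegree_X_pow_le k) <|
    natDegree_sum_le_of_forall_le _ _ fun i hi =>
      (natDegree_X_pow_le i).trans (Finset.mem_range.1 hi).le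

lemma card_roots_toFinset_fibPoly_le : (fibPoly k).roots.toFinset.card ≤ k :=
  (Multiset.toFinset_card_le _).trans ((card_roots' _).trans natDegree_fibPoly_le)

lemma isRoot_fibPoly_of_pow_mul_two_sub (hx : x ^ k * (2 - x) = 1) (hx1 : x ≠ 1) :
    (fibPoly k).IsRoot x := by
  have key : (x - 1) * (fibPoly k).eval x = 1 - x ^ k * (2 - x) := by
    simp only [fibPoly, eval_sub, eval_pow, eval_X, eval_finsetSum]
    linear_combination -mul_geom_sum x k
  rw [hx, sub_self] at key
  exact (mul_eq_zero.1 key).resolve_left (sub_ne_zero.2 hx1)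

end FibPoly

/-- `θ` is any argument of `z`, so `0` lies in every sector. -/
def InSector (k h : ℕ) (z : ℂ) : Prop :=
  ∃ (θ : ℝ) (m : ℤ), z = ‖z‖ * Complex.exp (θ * Complex.I) ∧
    |θ - 2 * π * h / k - 2 * π * m| < π / k

section InSector

variable {k h h' : ℕ} {z : ℂ}

lemma inSector_iff : InSector k h z ↔ ∃ (θ : ℝ) (m : ℤ), 0 ≤ θ ∧ θ < 2 * π ∧
    z = ‖z‖ * Complex.exp (θ * Complex.I) ∧ |θ - 2 * π * h / k - 2 * π * m| < π / k := by
  refine ⟨fun ⟨θ, m, hz, hθ⟩ => ?_, fun ⟨θ, m, _, _, hz, hθ⟩ => ⟨θ, m, hz, hθ⟩⟩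
  obtain ⟨hθ₀, hθ₁⟩ := toIcoMod_mem_Ico' two_pi_pos θ
  set n := toIcoDiv two_pi_pos 0 θ
  have hmod : toIcoMod two_pi_pos 0 θ = θ - n * (2 * π) :=
    eq_sub_of_add_eq (toIcoMod_add_toIcoDiv_mul _ _ _)
  refine ⟨_, m - n, hθ₀, hθ₁, ?_, ?_⟩
  · conv_lhs => rw [hz]
    congr 1
    exact Complex.exp_eq_exp_iff_exists_int.2 ⟨n, by rw [hmod]; push_cast; ring⟩
  · rw [hmod]
    convert hθ using 2
    push_cast
    ring

lemma InSector.eq (hz : z ≠ 0) (hh : h < k) (hh' : h' < k) (H : InSector k h z)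
    (H' : InSector k h' z) : h = h' := by
  obtain ⟨θ, m, hzθ, hθ⟩ := H
  obtain ⟨θ', m', hzθ', hθ'⟩ := H'
  obtain ⟨n, hn⟩ := Complex.exp_eq_exp_iff_exists_int.1 <|
    mul_left_cancel₀ (Complex.ofReal_ne_zero.2 (norm_ne_zero_iff.2 hz)) (hzθ'.symm.trans hzθ)
  have hθθ' : θ' = θ + n * (2 * π) := by
    simpa using congrArg Complex.im hn
  have hk : (0 : ℝ) < k := by exact_mod_cast (by omega : 0 < k)
  have hN : |((h - h' + k * (n + m - m') : ℤ) : ℝ)| < 1 := by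
    have key : ((h - h' + k * (n + m - m') : ℤ) : ℝ) = k / (2 * π) *
        ((θ' - 2 * π * h' / k - 2 * π * m') - (θ - 2 * π * h / k - 2 * π * m)) := by
      rw [hθθ']
      push_cast
      field_simp
      ring
    rw [key, abs_mul, abs_of_pos (by positivity)]
    calc k / (2 * π) * |(θ' - 2 * π * h' / k - 2 * π * m') - (θ - 2 * π * h / k - 2 * π * m)|
        < k / (2 * π) * (π / k + π / k) :=
          mul_lt_mul_of_pos_left ((abs_sub _ _).trans_lt (add_lt_add hθ' hθ)) (by positivity)
      _ = 1 := by field_simp; ring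
  have hN0 : (h - h' + k * (n + m - m') : ℤ) = 0 := by
    rwa [← Int.cast_abs, ← Int.cast_one, Int.cast_lt, Int.abs_lt_one_iff] at hN
  have : (h - h' : ℤ) = 0 :=
    Int.eq_zero_of_abs_lt_dvd (m := k) ⟨-(n + m - m'), by linear_combination hN0⟩
      (by rw [abs_lt]; omega)
  omega

lemma inSector_one (hk : k ≠ 0) : InSector k 0 1 :=
  ⟨0, 0, by simp, by simpa using by positivity⟩

end InSector

noncomputable def rootBranch (k h : ℕ) (x : ℂ) : ℂ :=
  Complex.exp ((2 * π * h * Complex.I - Complex.log (2 - x)) / k)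

section RootBranch

open Complex Metric

variable {k h : ℕ} {x : ℂ}

lemma one_le_re_two_sub (hx : ‖x‖ ≤ 1) : 1 ≤ (2 - x).re := by
  have := (re_le_norm x).trans hx
  simp only [sub_re, re_ofNat]
  linarith

lemma one_le_norm_two_sub (hx : ‖x‖ ≤ 1) : 1 ≤ ‖2 - x‖ :=
  (one_le_re_two_sub hx).trans (re_le_norm _)

lemma rootBranch_pow (hk : k ≠ 0) (hx : 2 - x ≠ 0) : rootBranch k h x ^ k = (2 - x)⁻¹ := by
  rw [rootBranch, ← Complex.exp_nat_mul, mul_div_cancel₀ _ (Nat.cast_ne_zero.2 hk),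
    Complex.exp_sub, Complex.exp_log hx, ← one_div]
  congr 1
  simpa [mul_comm, mul_left_comm] using Complex.exp_int_mul_two_pi_mul_I h

lemma norm_rootBranch_le_one (hx : 1 ≤ ‖2 - x‖) : ‖rootBranch k h x‖ ≤ 1 := by
  rw [rootBranch, norm_exp, Real.exp_le_one_iff]
  simp only [div_natCast_re, sub_re, log_re, mul_I_re]
  exact div_nonpos_of_nonpos_of_nonneg (by simpa using Real.log_nonneg hx) k.cast_nonneg

lemma inSector_rootBranch (hk : k ≠ 0) (hx : 0 < (2 - x).re) :
    InSector k h (rootBranch k h x) := by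
  refine ⟨_, 0, Complex.exp_eq_norm_mul_exp_im_mul_I _, ?_⟩
  have harg := abs_arg_lt_pi_div_two_iff.2 (Or.inl hx)
  have him : ((2 * π * h * I - Complex.log (2 - x)) / k).im = (2 * π * h - (2 - x).arg) / k := by
    simp [log_im]
  have hangle : ((2 * π * h * I - Complex.log (2 - x)) / k).im - 2 * π * h / k
      - 2 * π * ((0 : ℤ) : ℝ) = -(2 - x).arg / k := by
    rw [him]
    push_cast
    ring
  rw [hangle, abs_div, abs_neg, Nat.abs_cast]
  gcongr
  linarith [pi_pos]

lemma hasDerivAt_rootBranch (hx : 2 - x ∈ slitPlane) :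
    HasDerivAt (rootBranch k h) (rootBranch k h x * ((2 - x)⁻¹ / k)) x := by
  have hexponent :=
    ((((hasDerivAt_id' x).const_sub 2).clog hx).const_sub (2 * π * h * I)).div_const (k : ℂ)
  refine hexponent.cexp.congr_deriv ?_
  rw [rootBranch]
  ring

lemma lipschitzOnWith_rootBranch :
    LipschitzOnWith (k : NNReal)⁻¹ (rootBranch k h) (closedBall 0 1) := by
  refine (convex_closedBall 0 1).lipschitzOnWith_of_nnnorm_hasDerivWithin_le
    (fun x hx => (hasDerivAt_rootBranch (mem_slitPlane_iff.2 (.inl ?_))).hasDerivWithinAt)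
    fun x hx => ?_
  · linarith [one_le_re_two_sub (mem_closedBall_zero_iff.1 hx)]
  · have hx2 := one_le_norm_two_sub (mem_closedBall_zero_iff.1 hx)
    rw [← NNReal.coe_le_coe, coe_nnnorm, NNReal.coe_inv, NNReal.coe_natCast, norm_mul, norm_div,
      norm_inv, Complex.norm_natCast]
    calc ‖rootBranch k h x‖ * (‖2 - x‖⁻¹ / k) ≤ 1 * (1 / k) := by
          gcongr
          exacts [norm_rootBranch_le_one hx2, inv_le_one_of_one_le₀ hx2]
      _ = (k : ℝ)⁻¹ := by ring

lemma exists_fixedPoint_rootBranch (hk : 1 < k) :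
    ∃ x ∈ closedBall (0 : ℂ) 1, rootBranch k h x = x := by
  have hmaps : Set.MapsTo (rootBranch k h) (closedBall 0 1) (closedBall 0 1) := fun x hx =>
    mem_closedBall_zero_iff.2 <| norm_rootBranch_le_one <|
      one_le_norm_two_sub (mem_closedBall_zero_iff.1 hx)
  have hcontr : ContractingWith (k : NNReal)⁻¹ (hmaps.restrict _ _ _) :=
    ⟨inv_lt_one_of_one_lt₀ (by exact_mod_cast hk),
      lipschitzOnWith_rootBranch.mapsToRestrict hmaps⟩
  obtain ⟨x, hx, hfix, -⟩ := hcontr.exists_fixedPoint' isClosed_closedBall.isComplete hmaps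
    (mem_closedBall_self zero_le_one) (edist_ne_top _ _)
  exact ⟨x, hx, hfix⟩

end RootBranch

section Existence

variable {k h : ℕ}

lemma exists_root_inSector_of_ne_zero (hk : 1 < k) (hh : h < k) (h0 : h ≠ 0) :
    ∃ z, (fibPoly k).IsRoot z ∧ InSector k h z := by
  obtain ⟨x, hx, hfix⟩ := exists_fixedPoint_rootBranch (h := h) hk
  have hre := one_le_re_two_sub (mem_closedBall_zero_iff.1 hx)
  have hx2 : 2 - x ≠ 0 := fun h2 => by norm_num [h2] at hre
  have hsec : InSector k h x := hfix ▸ inSector_rootBranch (by omega) (by linarith)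
  refine ⟨x, isRoot_fibPoly_of_pow_mul_two_sub ?_ ?_, hsec⟩
  · calc x ^ k * (2 - x) = rootBranch k h x ^ k * (2 - x) := by rw [hfix]
      _ = 1 := by rw [rootBranch_pow (by omega) hx2, inv_mul_cancel₀ hx2]
  · rintro rfl
    exact h0 (hsec.eq one_ne_zero hh (by omega) (inSector_one (by omega)))

lemma exists_root_inSector_zero (hk : 2 ≤ k) :
    ∃ z, (fibPoly k).IsRoot z ∧ InSector k 0 z := by
  have hcont : ContinuousOn (fun y : ℝ => y ^ k * (2 - y)) (Set.Icc (3 / 2) 2) := by fun_prop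
  have h32 : 1 ≤ (3 / 2 : ℝ) ^ k * (2 - 3 / 2) := by
    have : (3 / 2 : ℝ) ^ 2 ≤ (3 / 2) ^ k := pow_le_pow_right₀ (by norm_num) hk
    linarith
  obtain ⟨γ, hγ, hγ1⟩ := intermediate_value_Icc' (by norm_num) hcont ⟨by norm_num, h32⟩
  have hγ0 : 0 ≤ γ := by linarith [hγ.1]
  refine ⟨γ, isRoot_fibPoly_of_pow_mul_two_sub (by exact_mod_cast hγ1) ?_, 0, 0, ?_, ?_⟩
  · exact_mod_cast (by linarith [hγ.1] : γ ≠ 1)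
  · simp [abs_of_nonneg hγ0]
  · simpa using by positivity

lemma exists_root_inSector (hk : 2 ≤ k) (hh : h < k) :
    ∃ z, (fibPoly k).IsRoot z ∧ InSector k h z := by
  rcases eq_or_ne h 0 with rfl | h0
  · exact exists_root_inSector_zero hk
  · exact exists_root_inSector_of_ne_zero hk hh h0

end Existence

/-- For every integer `k ≥ 2` and every `h ∈ {0, 1, …, k−1}`, there is exactly one root
`α` of `f_k` whose argument `θ ∈ [0, 2π)` (i.e. `α = |α|·e^(iθ)`) satisfies
`|θ − 2πh/k − 2πm| < π/k` for some integer `m`. -/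
theorem fibPoly_arg_distribution_unique (k : ℕ) (hk : 2 ≤ k) (h : ℕ) (hh : h < k) :
    ∃! α : ℂ, (fibPoly k).IsRoot α ∧
      ∃ (θ : ℝ) (m : ℤ), 0 ≤ θ ∧ θ < 2 * π ∧
        α = (‖α‖ : ℂ) * Complex.exp (θ * Complex.I) ∧
        |θ - 2 * π * h / k - 2 * π * m| < π / k := by
  have hk0 : k ≠ 0 := by omega
  have hroots : ∀ z, z ∈ (fibPoly k).roots.toFinset ↔ (fibPoly k).IsRoot z := fun z => by
    rw [Multiset.mem_toFinset, mem_roots (fibPoly_ne_zero hk0)]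
  have hunique := existsUnique_mem_of_card_le (P := fun j : Fin k => InSector k j)
    (card_roots_toFinset_fibPoly_le.trans_eq (Fintype.card_fin k).symm)
    (fun j => by simpa only [hroots] using exists_root_inSector hk j.2)
    (fun z hz i j hi hj => Fin.ext <|
      hi.eq (ne_zero_of_isRoot_fibPoly hk0 ((hroots z).1 hz)) i.2 j.2 hj) ⟨h, hh⟩
  simpa only [hroots, inSector_iff] using hunique
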